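/- arXiv:2601.02355 — 5 statements merged into one kernel-verified Lean document; each statement's English description precedes it below -/
import Mathlib

section
/- Let G be a group generated by three elements a, b, c such that no two elements of G generate all of G, and suppose there is an element z in the center of G with z ≠ 1 and z·z = 1 such that x·x ∈ {1, z} for every x ∈ G and the commutator of any two elements of G lies in {1, z}. Then either G is abelian, or the center of G has exactly 4 elements. -/
/-!
Commutators lie in `{1, z}` and are central, so `x ↦ ⁅x, g⁆` is multiplicative. If, say,
`⁅a, b⁆ = z`, multiplying `c` by one of `1, a, b, ab` yields a central `w` with
`G = ⟨a, b, w⟩`; since no two elements generate, `w ∉ ⟨a, b⟩ ∋ z`. As `⟨z, w⟩ = {1, z, w, zw}` is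
central and squares lie in it, every element of `G` is `k * t` with `k ∈ ⟨z, w⟩` and
`t ∈ {1, a, b, ab}`, and such an element is central only when `t = 1`. Hence
`Z(G) = {1, z, w, zw}`, of order 4.
-/

open scoped commutatorElement Pointwise

open Subgroup

section

variable {G : Type*} [Group G]

theorem mem_center_of_closure_eq_top {s : Set G} (hs : closure s = ⊤) {x : G}
    (h : ∀ y ∈ s, Commute y x) : x ∈ center G := by
  rwa [← centralizer_univ, ← coe_top, ← hs, centralizer_closure]

theorem commute_of_closure_eq_top {s : Set G} (hs : closure s = ⊤)
    (h : ∀ x ∈ s, ∀ y ∈ s, Commute y x) (x y : G) : Commute x y := by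
  have hcenter : center G = ⊤ := top_le_iff.1 <|
    hs ▸ (closure_le _).2 fun x hx => mem_center_of_closure_eq_top hs (h x hx)
  exact mem_center_iff.1 (hcenter ▸ mem_top y) x

theorem commutatorElement_mul_left_of_mem_center {x y g : G} (h : ⁅y, g⁆ ∈ center G) :
    ⁅x * y, g⁆ = ⁅x, g⁆ * ⁅y, g⁆ := by
  rw [commutatorElement_mul_left_eq_conj_mul, mem_center_iff.1 h x, mul_inv_cancel_right]
  exact (mem_center_iff.1 h _).symm

theorem eq_one_or_eq_of_mem_zpowers {y z : G} (hz : z * z = 1) (hy : y ∈ zpowers z) :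
    y = 1 ∨ y = z := by
  obtain ⟨n, rfl⟩ := mem_zpowers_iff.1 hy
  rw [zpow_eq_zpow_emod' n (n := 2) (by rwa [sq])]
  rcases Int.emod_two_eq n with h | h <;> simp [h]

theorem mem_mul_of_mem_closure {s T : Set G} {K : Subgroup G} (hK : K ≤ center G)
    (hsq : ∀ x ∈ s, x * x ∈ K) (hT₁ : (1 : G) ∈ T)
    (hT : ∀ t ∈ T, ∀ x ∈ s, t * x ∈ (K : Set G) * T) {g : G} (hg : g ∈ closure s) :
    g ∈ (K : Set G) * T := by
  have mul_right : ∀ g ∈ (K : Set G) * T, ∀ x ∈ s, g * x ∈ (K : Set G) * T := by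
    intro g hg x hx
    obtain ⟨k, hk, t, ht, rfl⟩ := Set.mem_mul.1 hg
    obtain ⟨k', hk', t', ht', h⟩ := Set.mem_mul.1 (hT t ht x hx)
    exact Set.mem_mul.2 ⟨k * k', K.mul_mem hk hk', t', ht', by rw [mul_assoc, h, mul_assoc]⟩
  induction hg using closure_induction_right with
  | one => exact Set.mem_mul.2 ⟨1, K.one_mem, 1, hT₁, one_mul 1⟩
  | mul_right g _ x hx ih => exact mul_right g ih x hx
  | mul_inv_cancel g _ x hx ih =>
    -- `x⁻¹ = x * (x * x)⁻¹`, and `(x * x)⁻¹` is central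
    obtain ⟨k, hk, t, ht, h⟩ := Set.mem_mul.1 (mul_right g ih x hx)
    refine Set.mem_mul.2 ⟨k * (x * x)⁻¹, K.mul_mem hk (K.inv_mem (hsq x hx)), t, ht, ?_⟩
    rw [mul_assoc, ← mem_center_iff.1 (hK (K.inv_mem (hsq x hx))), ← mul_assoc, h]
    group

theorem coe_closure_pair_subset {z w : G} (hz : z ∈ center G) (hz2 : z * z = 1)
    (hw2 : w * w = 1 ∨ w * w = z) : (closure {z, w} : Set G) ⊆ {1, z, w, z * w} := by
  have hw2K : w * w ∈ zpowers z := hw2.elim (· ▸ one_mem _) (· ▸ mem_zpowers z)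
  have hsq : ∀ x ∈ ({z, w} : Set G), x * x ∈ zpowers z := by
    rintro x (rfl | rfl)
    exacts [hz2 ▸ one_mem _, hw2K]
  have hT : ∀ t ∈ ({1, w} : Set G), ∀ x ∈ ({z, w} : Set G),
      t * x ∈ (zpowers z : Set G) * {1, w} := by
    intro t ht x hx
    rcases ht with ht | ht <;> rcases hx with hx | hx <;> subst t x
    · exact Set.mem_mul.2 ⟨z, mem_zpowers z, 1, by simp, by simp⟩
    · exact Set.mem_mul.2 ⟨1, one_mem _, w, by simp, by simp⟩
    · exact Set.mem_mul.2 ⟨z, mem_zpowers z, w, by simp, (mem_center_iff.1 hz w).symm⟩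
    · exact Set.mem_mul.2 ⟨w * w, hw2K, 1, by simp, mul_one _⟩
  intro y hy
  obtain ⟨k, hk, t, ht, rfl⟩ :=
    Set.mem_mul.1 (mem_mul_of_mem_closure (zpowers_le.2 hz) hsq (by simp) hT hy)
  rcases eq_one_or_eq_of_mem_zpowers hz2 hk with rfl | rfl <;> rcases ht with rfl | rfl <;> simp

theorem center_le_closure_pair {a b z w : G} (htop : closure {a, b, w} = ⊤)
    (hz : z ∈ center G) (hw : w ∈ center G) (hab : ⁅a, b⁆ = z) (hz1 : z ≠ 1)
    (hsq : ∀ x : G, x * x = 1 ∨ x * x = z) : center G ≤ closure {z, w} := by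
  set K := closure ({z, w} : Set G)
  have hKc : K ≤ center G := (closure_le _).2 (Set.insert_subset_iff.2 ⟨hz, by simpa using hw⟩)
  have hzK : z ∈ K := subset_closure (by simp)
  have hwK : w ∈ K := subset_closure (by simp)
  have hsqK : ∀ x : G, x * x ∈ K := fun x => (hsq x).elim (· ▸ K.one_mem) (· ▸ hzK)
  have hba : b * a = z⁻¹ * (a * b) := by rw [← hab, commutatorElement_def]; group
  have hT : ∀ t ∈ ({1, a, b, a * b} : Set G), ∀ x ∈ ({a, b, w} : Set G),
      t * x ∈ (K : Set G) * {1, a, b, a * b} := by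
    intro t ht x hx
    rcases hx with hx | hx | hx <;> subst x
    · rcases ht with ht | ht | ht | ht <;> subst t
      · exact Set.mem_mul.2 ⟨1, K.one_mem, a, by simp, by group⟩
      · exact Set.mem_mul.2 ⟨a * a, hsqK a, 1, by simp, mul_one _⟩
      · exact Set.mem_mul.2 ⟨z⁻¹, K.inv_mem hzK, a * b, by simp, hba.symm⟩
      · refine Set.mem_mul.2 ⟨z⁻¹ * (a * a), K.mul_mem (K.inv_mem hzK) (hsqK a), b, by simp, ?_⟩
        rw [mul_assoc a b a, hba, ← mul_assoc a z⁻¹, mem_center_iff.1 (inv_mem hz) a]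
        group
    · rcases ht with ht | ht | ht | ht <;> subst t
      · exact Set.mem_mul.2 ⟨1, K.one_mem, b, by simp, by group⟩
      · exact Set.mem_mul.2 ⟨1, K.one_mem, a * b, by simp, one_mul _⟩
      · exact Set.mem_mul.2 ⟨b * b, hsqK b, 1, by simp, mul_one _⟩
      · refine Set.mem_mul.2 ⟨b * b, hsqK b, a, by simp, ?_⟩
        rw [← mem_center_iff.1 (hKc (hsqK b)) a, mul_assoc]
    · exact Set.mem_mul.2 ⟨w, hwK, t, ht, (mem_center_iff.1 hw t).symm⟩
  have hba_ne : b * a ≠ a * b := fun h => hz1 (by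
    rw [← hab, commutatorElement_eq_one_iff_mul_comm, h])
  intro x hx
  obtain ⟨k, hk, t, ht, rfl⟩ := Set.mem_mul.1 <|
    mem_mul_of_mem_closure hKc (fun x _ => hsqK x) (by simp) hT (htop ▸ mem_top x)
  have htc : t ∈ center G := by simpa using mul_mem (inv_mem (hKc hk)) hx
  rcases ht with rfl | rfl | rfl | rfl
  · simpa using hk
  · exact absurd (mem_center_iff.1 htc b) hba_ne
  · exact absurd (mem_center_iff.1 htc a).symm hba_ne
  · exact absurd (mul_left_cancel ((mem_center_iff.1 htc a).trans (mul_assoc a b a))).symm hba_ne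

theorem closure_insert_insert_mul {a b c u : G} (hu : u ∈ closure {a, b}) :
    closure {a, b, c * u} = closure {a, b, c} := by
  have hpair (x : G) : closure {a, b} ≤ closure {a, b, x} :=
    closure_mono (Set.insert_subset_insert (by simp))
  apply le_antisymm <;> refine (closure_le _).2 (Set.insert_subset_iff.2 ⟨subset_closure (by simp),
    Set.insert_subset_iff.2 ⟨subset_closure (by simp), ?_⟩⟩)
  · exact Set.singleton_subset_iff.2 (mul_mem (subset_closure (by simp)) (hpair c hu))
  · refine Set.singleton_subset_iff.2 ?_
    simpa using mul_mem (subset_closure (by simp) : c * u ∈ closure {a, b, c * u})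
      (inv_mem (hpair (c * u) hu))

theorem exists_mem_closure_pair_commutatorElement_eq_one {a b c z : G}
    (hcen : ∀ x y : G, ⁅x, y⁆ ∈ center G) (hcomm : ∀ x y : G, ⁅x, y⁆ = 1 ∨ ⁅x, y⁆ = z)
    (hab : ⁅a, b⁆ = z) (hz2 : z * z = 1) :
    ∃ u ∈ closure {a, b}, ⁅c * u, a⁆ = 1 ∧ ⁅c * u, b⁆ = 1 := by
  have hba : ⁅b, a⁆ = z := by
    rw [← commutatorElement_inv, hab]; exact inv_eq_of_mul_eq_one_right hz2
  have bilin (x y g : G) : ⁅x * y, g⁆ = ⁅x, g⁆ * ⁅y, g⁆ :=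
    commutatorElement_mul_left_of_mem_center (hcen y g)
  have ha : a ∈ closure {a, b} := subset_closure (by simp)
  have hb : b ∈ closure {a, b} := subset_closure (by simp)
  rcases hcomm c a with hca | hca <;> rcases hcomm c b with hcb | hcb
  · exact ⟨1, one_mem _, by simpa using hca, by simpa using hcb⟩
  · exact ⟨a, ha, by rw [bilin, hca, commutatorElement_self, one_mul],
      by rw [bilin, hcb, hab, hz2]⟩
  · exact ⟨b, hb, by rw [bilin, hca, hba, hz2],
      by rw [bilin, hcb, commutatorElement_self, one_mul]⟩
  · exact ⟨a * b, mul_mem ha hb,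
      by rw [bilin, bilin, hca, hba, commutatorElement_self, one_mul, hz2],
      by rw [bilin, bilin, hcb, hab, commutatorElement_self, mul_one, hz2]⟩

theorem ncard_insert_one_mul_eq_four {H : Subgroup G} {z w : G} (hz1 : z ≠ 1) (hzH : z ∈ H)
    (hwH : w ∉ H) : ({1, z, w, z * w} : Set G).ncard = 4 := by
  have hzwH : z * w ∉ H := fun h => hwH (by simpa using mul_mem (inv_mem hzH) h)
  rw [Set.ncard_insert_of_notMem, Set.ncard_insert_of_notMem, Set.ncard_pair]
  · exact fun h => hz1 (by simpa using h)
  · simp only [Set.mem_insert_iff, Set.mem_singleton_iff, not_or]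
    exact ⟨fun h => hwH (h ▸ hzH), fun h => hzwH (h ▸ hzH)⟩
  · simp only [Set.mem_insert_iff, Set.mem_singleton_iff, not_or]
    exact ⟨hz1.symm, fun h => hwH (h ▸ H.one_mem), fun h => hzwH (h ▸ H.one_mem)⟩

theorem exists_mem_center_closure_eq_top {a b c z : G} (hgen : closure ({a, b, c} : Set G) = ⊤)
    (hab_top : closure ({a, b} : Set G) ≠ ⊤) (hz : z ∈ center G) (hz2 : z * z = 1)
    (hcomm : ∀ x y : G, ⁅x, y⁆ = 1 ∨ ⁅x, y⁆ = z) (hab : ⁅a, b⁆ = z) :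
    ∃ w ∈ center G, closure {a, b, w} = ⊤ ∧ w ∉ closure {a, b} := by
  have hcen (x y : G) : ⁅x, y⁆ ∈ center G := (hcomm x y).elim (· ▸ one_mem _) (· ▸ hz)
  obtain ⟨u, hu, hua, hub⟩ :=
    exists_mem_closure_pair_commutatorElement_eq_one (c := c) hcen hcomm hab hz2
  have htop : closure {a, b, c * u} = ⊤ := (closure_insert_insert_mul hu).trans hgen
  refine ⟨c * u, mem_center_of_closure_eq_top htop ?_, htop, fun hwH => hab_top ?_⟩
  · rintro y (rfl | rfl | rfl)
    exacts [(commutatorElement_eq_one_iff_commute.1 hua).symm,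
      (commutatorElement_eq_one_iff_commute.1 hub).symm, Commute.refl _]
  · rw [eq_top_iff, ← htop, closure_le]
    rintro y (rfl | rfl | rfl)
    exacts [subset_closure (by simp), subset_closure (by simp), hwH]

theorem card_center_eq_four {a b c z : G} (hgen : closure ({a, b, c} : Set G) = ⊤)
    (hab_top : closure ({a, b} : Set G) ≠ ⊤)
    (hz : z ∈ center G) (hz1 : z ≠ 1) (hz2 : z * z = 1)
    (hsq : ∀ x : G, x * x = 1 ∨ x * x = z) (hcomm : ∀ x y : G, ⁅x, y⁆ = 1 ∨ ⁅x, y⁆ = z)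
    (hab : ⁅a, b⁆ = z) : Nat.card (center G) = 4 := by
  obtain ⟨w, hw, htop, hwH⟩ := exists_mem_center_closure_eq_top hgen hab_top hz hz2 hcomm hab
  have hzH : z ∈ closure {a, b} := by
    have ha : a ∈ closure {a, b} := subset_closure (by simp)
    have hb : b ∈ closure {a, b} := subset_closure (by simp)
    rw [← hab, commutatorElement_def]
    exact mul_mem (mul_mem (mul_mem ha hb) (inv_mem ha)) (inv_mem hb)
  have hcenter : (center G : Set G) = {1, z, w, z * w} := by
    refine Set.Subset.antisymm (fun x hx => coe_closure_pair_subset hz hz2 (hsq w)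
      (center_le_closure_pair htop hz hw hab hz1 hsq hx)) ?_
    rintro y (rfl | rfl | rfl | rfl)
    exacts [one_mem _, hz, hw, mul_mem hz hw]
  rw [← ncard_insert_one_mul_eq_four hz1 hzH hwH, ← hcenter]
  exact Nat.card_coe_set_eq _

end

/-- A 3-generated group in which no two elements generate, with a central element `z` of
order 2 such that every square and every commutator lies in `{1, z}`, is either abelian
or has center of order exactly 4. -/
theorem stmt0 {G : Type*} [Group G] (a b c z : G)
    (hgen : Subgroup.closure ({a, b, c} : Set G) = ⊤)
    (hno2 : ∀ x y : G, Subgroup.closure ({x, y} : Set G) ≠ ⊤)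
    (hz : z ∈ Subgroup.center G) (hz1 : z ≠ 1) (hz2 : z * z = 1)
    (hsq : ∀ x : G, x * x = 1 ∨ x * x = z)
    (hcomm : ∀ x y : G, ⁅x, y⁆ = 1 ∨ ⁅x, y⁆ = z) :
    (∀ x y : G, x * y = y * x) ∨ Nat.card (Subgroup.center G) = 4 := by
  rcases hcomm a b with hab | hab
  swap
  · exact Or.inr (card_center_eq_four hgen (hno2 a b) hz hz1 hz2 hsq hcomm hab)
  rcases hcomm a c with hac | hac
  swap
  · refine Or.inr (card_center_eq_four (c := b) ?_ (hno2 a c) hz hz1 hz2 hsq hcomm hac)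
    rwa [Set.pair_comm]
  rcases hcomm b c with hbc | hbc
  swap
  · refine Or.inr (card_center_eq_four (c := a) ?_ (hno2 b c) hz hz1 hz2 hsq hcomm hbc)
    rwa [Set.pair_comm, Set.insert_comm]
  simp only [commutatorElement_eq_one_iff_commute] at hab hac hbc
  refine Or.inl (commute_of_closure_eq_top hgen ?_)
  rintro x (rfl | rfl | rfl) y (rfl | rfl | rfl)
  exacts [.refl _, hab.symm, hac.symm, hab, .refl _, hbc.symm, hac, hbc, .refl _]
end

section
/- Let P and Q be diassociative loops and let f : P → Q be a half-isomorphism. Then f maps the commutant of P onto the commutant of Q, i.e. f(C(P)) = C(Q). -/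
/-- A loop: a binary operation with two-sided identity in which left and right
translations are bijections (equivalently, equations `a·x = b` and `y·a = b`
have unique solutions). -/
structure LoopStr (α : Type*) where
  mul : α → α → α
  one : α
  one_mul : ∀ x, mul one x = x
  mul_one : ∀ x, mul x one = x
  mulLeft_bij : ∀ a, Function.Bijective (fun x => mul a x)
  mulRight_bij : ∀ a, Function.Bijective (fun x => mul x a)

namespace LoopStr

variable {α : Type*} (S : LoopStr α)

/-- A subset containing `1` and closed under multiplication and (left and right) inverses. -/
def IsClosed (T : Set α) : Prop :=
  S.one ∈ T ∧ (∀ x ∈ T, ∀ y ∈ T, S.mul x y ∈ T) ∧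
    (∀ x ∈ T, ∀ y, S.mul x y = S.one → y ∈ T) ∧
    (∀ x ∈ T, ∀ y, S.mul y x = S.one → y ∈ T)

/-- The subloop generated by a set: the smallest closed subset containing it. -/
def gen (X : Set α) : Set α := ⋂₀ {T | X ⊆ T ∧ S.IsClosed T}

def Generates (X : Set α) : Prop := S.gen X = Set.univ

/-- A basis: a minimal generating set. -/
def IsBasis (X : Set α) : Prop := S.Generates X ∧ ∀ Y ⊂ X, ¬ S.Generates Y

def IsHalfAut (f : α → α) : Prop :=
  Function.Bijective f ∧
    ∀ x y, f (S.mul x y) = S.mul (f x) (f y) ∨ f (S.mul x y) = S.mul (f y) (f x)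

def IsAut (f : α → α) : Prop :=
  Function.Bijective f ∧ ∀ x y, f (S.mul x y) = S.mul (f x) (f y)

def IsAntiAut (f : α → α) : Prop :=
  Function.Bijective f ∧ ∀ x y, f (S.mul x y) = S.mul (f y) (f x)

/-- The commutant of a loop. -/
def commutant : Set α := {c | ∀ x, S.mul c x = S.mul x c}

/-- The nucleus of a loop. -/
def nucleus : Set α :=
  {a | ∀ u v, S.mul (S.mul a u) v = S.mul a (S.mul u v) ∧
        S.mul (S.mul u a) v = S.mul u (S.mul a v) ∧
        S.mul (S.mul u v) a = S.mul u (S.mul v a)}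

end LoopStr

/-- A code loop: a finite Moufang loop with a unique nontrivial square `neg` (written `-1`),
which (by Chein–Goodaire) is central of order 2, and all squares, commutators and
associators lie in `{1, neg}`. -/
structure CodeLoop (α : Type*) extends LoopStr α where
  finite : Finite α
  moufang : ∀ x y z, mul (mul x (mul z x)) y = mul x (mul z (mul x y))
  neg : α
  neg_ne_one : neg ≠ one
  neg_is_square : ∃ x, mul x x = neg
  square_unique : ∀ m, m ≠ one → (∃ x, mul x x = m) → m = neg
  neg_mul_comm : ∀ x, mul neg x = mul x neg
  neg_mul_assoc₁ : ∀ x y, mul (mul neg x) y = mul neg (mul x y)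
  neg_mul_assoc₂ : ∀ x y, mul (mul x neg) y = mul x (mul neg y)
  neg_mul_assoc₃ : ∀ x y, mul (mul x y) neg = mul x (mul y neg)
  neg_neg : mul neg neg = one
  square_mem : ∀ x, mul x x = one ∨ mul x x = neg
  comm_mem : ∀ x y, mul x y = mul y x ∨ mul x y = mul (mul y x) neg
  assoc_mem : ∀ x y z, mul (mul x y) z = mul x (mul y z) ∨
      mul (mul x y) z = mul (mul x (mul y z)) neg

/-- The left-normed product `a_σ` of the basis elements indexed by `σ`, in increasing order. -/
def aSig {α : Type*} (S : LoopStr α) {n : ℕ} (a : Fin n → α) (σ : Finset (Fin n)) : α :=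
  ((σ.sort (· ≤ ·)).map a).foldl S.mul S.one


/-- A loop is diassociative if every subloop generated by two elements is associative. -/
def LoopStr.IsDiassociative {α : Type*} (S : LoopStr α) : Prop :=
  ∀ a b : α, ∀ x ∈ S.gen {a, b}, ∀ y ∈ S.gen {a, b}, ∀ z ∈ S.gen {a, b},
    S.mul (S.mul x y) z = S.mul x (S.mul y z)

theorem LoopStr.mem_gen_of_mem {α : Type*} (S : LoopStr α) {X : Set α} {x : α} (hx : x ∈ X) :
    x ∈ S.gen X :=
  Set.mem_sInter.mpr fun _ hT => hT.1 hx

theorem LoopStr.mul_mem_gen {α : Type*} (S : LoopStr α) {X : Set α} {x y : α}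
    (hx : x ∈ S.gen X) (hy : y ∈ S.gen X) : S.mul x y ∈ S.gen X :=
  Set.mem_sInter.mpr fun T hT =>
    hT.2.2.1 x (Set.mem_sInter.mp hx T hT) y (Set.mem_sInter.mp hy T hT)

theorem LoopStr.left_cancel {α : Type*} (S : LoopStr α) {a x y : α}
    (h : S.mul a x = S.mul a y) : x = y :=
  (S.mulLeft_bij a).injective h

theorem LoopStr.right_cancel {α : Type*} (S : LoopStr α) {a x y : α}
    (h : S.mul x a = S.mul y a) : x = y :=
  (S.mulRight_bij a).injective h

theorem key_half_comm {P Q : Type*} (SP : LoopStr P) (SQ : LoopStr Q)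
    (hP : SP.IsDiassociative) (hQ : SQ.IsDiassociative)
    (f : P → Q)
    (hhalf : ∀ x y, f (SP.mul x y) = SQ.mul (f x) (f y) ∨
        f (SP.mul x y) = SQ.mul (f y) (f x))
    (x y : P) (hcomm : SP.mul x y = SP.mul y x)
    (hA : f (SP.mul x y) = SQ.mul (f x) (f y)) :
    SQ.mul (f x) (f y) = SQ.mul (f y) (f x) := by
  have hx : x ∈ SP.gen {x, y} := SP.mem_gen_of_mem (by simp)
  have hy : y ∈ SP.gen {x, y} := SP.mem_gen_of_mem (by simp)
  have hxy := SP.mul_mem_gen hx hy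
  have aP := hP x y
  have hu : f x ∈ SQ.gen {f x, f y} := SQ.mem_gen_of_mem (by simp)
  have hv : f y ∈ SQ.gen {f x, f y} := SQ.mem_gen_of_mem (by simp)
  have huv := SQ.mul_mem_gen hu hv
  have aQ := hQ (f x) (f y)
  have hyy : f (SP.mul y y) = SQ.mul (f y) (f y) := by
    rcases hhalf y y with h | h <;> exact h
  have ht : SP.mul (SP.mul x y) y = SP.mul x (SP.mul y y) := aP x hx y hy y hy
  have hF2 : f (SP.mul (SP.mul x y) y) = SQ.mul (f x) (SQ.mul (f y) (f y)) ∨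
      f (SP.mul (SP.mul x y) y) = SQ.mul (SQ.mul (f y) (f y)) (f x) := by
    rw [ht]
    rcases hhalf x (SP.mul y y) with h | h <;> rw [hyy] at h
    · exact Or.inl h
    · exact Or.inr h
  rcases hhalf (SP.mul x y) y with hF1 | hF1
  · -- f((xy)y) = (uv)v
    rw [hA] at hF1
    have hss : f (SP.mul (SP.mul x y) (SP.mul x y)) =
        SQ.mul (SQ.mul (f x) (f y)) (SQ.mul (f x) (f y)) := by
      rcases hhalf (SP.mul x y) (SP.mul x y) with h | h <;> rw [hA] at h <;> exact h
    have hsx : SP.mul (SP.mul x y) (SP.mul x y) = SP.mul x (SP.mul (SP.mul x y) y) := by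
      rw [aP x hx y hy _ hxy, ← aP y hy x hx y hy, ← hcomm]
    rcases hhalf x (SP.mul (SP.mul x y) y) with h | h <;> rw [← hsx, hss, hF1] at h
    · -- (uv)(uv) = u((uv)v)
      rw [aQ (f x) hu (f y) hv _ huv] at h
      have h2 := SQ.left_cancel h
      rw [← aQ (f y) hv (f x) hu (f y) hv] at h2
      exact (SQ.right_cancel h2).symm
    · -- (uv)(uv) = ((uv)v)u
      rw [aQ _ huv (f y) hv (f x) hu] at h
      exact SQ.left_cancel h
  · -- f((xy)y) = v(uv)
    rw [hA] at hF1
    rcases hF2 with h | h <;> rw [hF1] at h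
    · -- v(uv) = u(vv)
      rw [← aQ (f y) hv (f x) hu (f y) hv, ← aQ (f x) hu (f y) hv (f y) hv] at h
      exact (SQ.right_cancel h).symm
    · -- v(uv) = (vv)u
      rw [aQ (f y) hv (f y) hv (f x) hu] at h
      exact SQ.left_cancel h

/-- A half-isomorphism between diassociative loops maps the commutant onto the commutant. -/
theorem stmt1 {P Q : Type*} (SP : LoopStr P) (SQ : LoopStr Q)
    (hP : SP.IsDiassociative) (hQ : SQ.IsDiassociative)
    (f : P → Q) (hbij : Function.Bijective f)
    (hhalf : ∀ x y, f (SP.mul x y) = SQ.mul (f x) (f y) ∨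
        f (SP.mul x y) = SQ.mul (f y) (f x)) :
    f '' SP.commutant = SQ.commutant := by
  have keyQ : ∀ x y : P, SP.mul x y = SP.mul y x →
      SQ.mul (f x) (f y) = SQ.mul (f y) (f x) := by
    intro x y hc
    rcases hhalf x y with h | h
    · exact key_half_comm SP SQ hP hQ f hhalf x y hc h
    · have h' : f (SP.mul y x) = SQ.mul (f y) (f x) := by rw [← hc]; exact h
      exact (key_half_comm SP SQ hP hQ f hhalf y x hc.symm h').symm
  ext d
  simp only [LoopStr.commutant, Set.mem_image, Set.mem_setOf_eq]
  constructor
  · rintro ⟨c, hc, rfl⟩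
    intro q
    obtain ⟨x, rfl⟩ := hbij.2 q
    exact keyQ c x (hc x)
  · intro hd
    obtain ⟨c, rfl⟩ := hbij.2 d
    refine ⟨c, fun x => ?_, rfl⟩
    apply hbij.1
    have h1 : f (SP.mul c x) = SQ.mul (f c) (f x) := by
      rcases hhalf c x with h | h
      · exact h
      · rw [h]; exact (hd (f x)).symm
    have h2 : f (SP.mul x c) = SQ.mul (f c) (f x) := by
      rcases hhalf x c with h | h
      · rw [h]; exact (hd (f x)).symm
      · exact h
    rw [h1, h2]
end

section
/- Let L be a code loop with basis B = {a₁, a₂, …, aₙ} and let f be a half-automorphism of L. Then {f(a₁), f(a₂), …, f(aₙ)} is also a basis of L, and it has the same related characteristic vector: for all indices i < j < k, one has aᵢ·aᵢ = 1 if and only if f(aᵢ)·f(aᵢ) = 1; aᵢ·aⱼ = aⱼ·aᵢ if and only if f(aᵢ)·f(aⱼ) = f(aⱼ)·f(aᵢ); and (aᵢ·aⱼ)·aₖ = aᵢ·(aⱼ·aₖ) if and only if (f(aᵢ)·f(aⱼ))·f(aₖ) = f(aᵢ)·(f(aⱼ)·f(aₖ)). -/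
namespace LoopStr

variable {α : Type*} (S : LoopStr α)

lemma lcan {a x y : α} (h : S.mul a x = S.mul a y) : x = y := (S.mulLeft_bij a).1 h

lemma subset_gen {X : Set α} : X ⊆ S.gen X :=
  fun x hx => Set.mem_sInter.mpr fun _ hT => hT.1 hx

lemma gen_subset {X T : Set α} (h1 : X ⊆ T) (h2 : S.IsClosed T) : S.gen X ⊆ T :=
  Set.sInter_subset_of_mem ⟨h1, h2⟩

lemma gen_closed (X : Set α) : S.IsClosed (S.gen X) := by
  refine ⟨Set.mem_sInter.mpr fun T hT => hT.2.1, ?_, ?_, ?_⟩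
  · intro x hx y hy
    exact Set.mem_sInter.mpr fun T hT =>
      hT.2.2.1 x (Set.mem_sInter.mp hx T hT) y (Set.mem_sInter.mp hy T hT)
  · intro x hx y hxy
    exact Set.mem_sInter.mpr fun T hT => hT.2.2.2.1 x (Set.mem_sInter.mp hx T hT) y hxy
  · intro x hx y hxy
    exact Set.mem_sInter.mpr fun T hT => hT.2.2.2.2 x (Set.mem_sInter.mp hx T hT) y hxy

lemma half_one {f : α → α} (hf : S.IsHalfAut f) : f S.one = S.one := by
  have h := hf.2 S.one S.one
  rw [S.one_mul] at h
  rcases h with h | h <;>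
  · exact (S.lcan (h.symm.trans (S.mul_one (f S.one)).symm)).symm ▸ rfl

lemma gen_image {f : α → α} (hf : S.IsHalfAut f) {X : Set α} (hX : S.Generates X) :
    S.Generates (f '' X) := by
  set T := S.gen (f '' X) with hT
  have hTc : S.IsClosed T := S.gen_closed _
  have hpre : S.IsClosed (f ⁻¹' T) := by
    refine ⟨?_, ?_, ?_, ?_⟩
    · show f S.one ∈ T
      rw [S.half_one hf]; exact hTc.1
    · intro x hx y hy
      show f (S.mul x y) ∈ T
      rcases hf.2 x y with h | h <;> rw [h]
      · exact hTc.2.1 _ hx _ hy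
      · exact hTc.2.1 _ hy _ hx
    · intro x hx y hxy
      show f y ∈ T
      have h1 : f (S.mul x y) = S.one := by rw [hxy, S.half_one hf]
      rcases hf.2 x y with h | h <;> rw [h] at h1
      · exact hTc.2.2.1 _ hx _ h1
      · exact hTc.2.2.2 _ hx _ h1
    · intro x hx y hxy
      show f y ∈ T
      have h1 : f (S.mul y x) = S.one := by rw [hxy, S.half_one hf]
      rcases hf.2 y x with h | h <;> rw [h] at h1
      · exact hTc.2.2.2 _ hx _ h1
      · exact hTc.2.2.1 _ hx _ h1
  have hXp : X ⊆ f ⁻¹' T := fun x hx => S.subset_gen (Set.mem_image_of_mem f hx)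
  have hsub : S.gen X ⊆ f ⁻¹' T := S.gen_subset hXp hpre
  have hall : ∀ z, f z ∈ T := fun z => hsub (by rw [hX]; trivial)
  refine Set.eq_univ_of_forall fun z => ?_
  obtain ⟨w, rfl⟩ := hf.1.2 z
  exact hall w

end LoopStr

namespace CodeLoop

variable {α : Type*} (C : CodeLoop α)

lemma lcan' {a x y : α} (h : C.mul a x = C.mul a y) : x = y := (C.mulLeft_bij a).1 h
lemma rcan {a x y : α} (h : C.mul x a = C.mul y a) : x = y := (C.mulRight_bij a).1 h

def IsZ (c : α) : Prop := c = C.one ∨ c = C.neg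

lemma sq_isZ (x : α) : C.IsZ (C.mul x x) := C.square_mem x

lemma z_comm {c : α} (hc : C.IsZ c) (x : α) : C.mul c x = C.mul x c := by
  rcases hc with rfl | rfl
  · rw [C.one_mul, C.mul_one]
  · exact C.neg_mul_comm x

lemma z_a1 {c : α} (hc : C.IsZ c) (x y : α) :
    C.mul (C.mul c x) y = C.mul c (C.mul x y) := by
  rcases hc with rfl | rfl
  · rw [C.one_mul, C.one_mul]
  · exact C.neg_mul_assoc₁ x y

lemma z_a2 {c : α} (hc : C.IsZ c) (x y : α) :
    C.mul (C.mul x c) y = C.mul x (C.mul c y) := by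
  rcases hc with rfl | rfl
  · rw [C.mul_one, C.one_mul]
  · exact C.neg_mul_assoc₂ x y

lemma z_a3 {c : α} (hc : C.IsZ c) (x y : α) :
    C.mul (C.mul x y) c = C.mul x (C.mul y c) := by
  rcases hc with rfl | rfl
  · rw [C.mul_one, C.mul_one]
  · exact C.neg_mul_assoc₃ x y

lemma z_pull {c : α} (hc : C.IsZ c) (x w : α) :
    C.mul x (C.mul w c) = C.mul (C.mul x w) c := (C.z_a3 hc x w).symm

lemma z_slide {c : α} (hc : C.IsZ c) (p q : α) :
    C.mul (C.mul p c) q = C.mul (C.mul p q) c := by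
  rw [C.z_a2 hc, C.z_comm hc, C.z_pull hc]

open Classical in
noncomputable def cm (u v : α) : α := if C.mul u v = C.mul v u then C.one else C.neg

open Classical in
noncomputable def asc (x y z : α) : α :=
  if C.mul (C.mul x y) z = C.mul x (C.mul y z) then C.one else C.neg

lemma cm_spec (u v : α) : C.mul u v = C.mul (C.mul v u) (C.cm u v) := by
  unfold cm; split_ifs with h
  · rw [C.mul_one, h]
  · rcases C.comm_mem u v with hc | hc
    · exact absurd hc h
    · exact hc

lemma cm_isZ (u v : α) : C.IsZ (C.cm u v) := by
  unfold cm; split_ifs <;> [exact Or.inl rfl; exact Or.inr rfl]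

lemma cm_one_iff (u v : α) : C.cm u v = C.one ↔ C.mul u v = C.mul v u := by
  unfold cm; split_ifs with h
  · exact iff_of_true rfl h
  · exact iff_of_false C.neg_ne_one h

lemma cm_congr {u v u' v' : α}
    (h : (C.mul u v = C.mul v u) ↔ (C.mul u' v' = C.mul v' u')) :
    C.cm u v = C.cm u' v' := by
  unfold cm; split_ifs with h1 h2
  · rfl
  · exact absurd (h.mp h1) h2
  · exact absurd (h.mpr ‹_›) h1
  · rfl

lemma asc_spec (x y z : α) :
    C.mul (C.mul x y) z = C.mul (C.mul x (C.mul y z)) (C.asc x y z) := by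
  unfold asc; split_ifs with h
  · rw [C.mul_one, h]
  · rcases C.assoc_mem x y z with hc | hc
    · exact absurd hc h
    · exact hc

lemma asc_isZ (x y z : α) : C.IsZ (C.asc x y z) := by
  unfold asc; split_ifs <;> [exact Or.inl rfl; exact Or.inr rfl]

lemma asc_one_iff (x y z : α) :
    C.asc x y z = C.one ↔ C.mul (C.mul x y) z = C.mul x (C.mul y z) := by
  unfold asc; split_ifs with h
  · exact iff_of_true rfl h
  · exact iff_of_false C.neg_ne_one h

lemma la (x y : α) : C.mul x (C.mul x y) = C.mul (C.mul x x) y := by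
  have h := C.moufang x y C.one
  rw [C.one_mul, C.one_mul] at h
  exact h.symm

/-- The key Bol consequence: `c(z,y)·c(z,x) = a(x,y,z)·c(z,xy)`. -/
lemma ikey (x y z : α) :
    C.mul (C.cm z y) (C.cm z x) = C.mul (C.asc x y z) (C.cm z (C.mul x y)) := by
  have h := C.moufang x y z
  rw [C.cm_spec z x] at h
  rw [C.z_pull (C.cm_isZ z x)] at h
  rw [C.la] at h
  rw [C.z_slide (C.cm_isZ z x)] at h
  rw [C.z_a1 (C.sq_isZ x)] at h
  rw [C.cm_spec z y] at h
  rw [C.z_pull (C.cm_isZ z y)] at h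
  rw [C.cm_spec z (C.mul x y)] at h
  rw [C.asc_spec x y z] at h
  rw [C.z_pull (C.cm_isZ z (C.mul x y))] at h
  rw [C.z_pull (C.asc_isZ x y z)] at h
  rw [C.la] at h
  rw [C.z_a3 (C.cm_isZ z x)] at h
  rw [C.z_a3 (C.cm_isZ z (C.mul x y))] at h
  exact C.lcan' h

lemma asc_congr {x y z u v w : α}
    (hx : C.cm z x = C.cm w u) (hy : C.cm z y = C.cm w v)
    (hxy : C.cm z (C.mul x y) = C.cm w (C.mul u v)) :
    C.asc x y z = C.asc u v w := by
  have h1 := C.ikey x y z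
  have h2 := C.ikey u v w
  rw [hx, hy, hxy] at h1
  rw [h1] at h2
  exact C.rcan h2

lemma comm_zmul_iff {c : α} (hc : C.IsZ c) (q p : α) :
    (C.mul q (C.mul p c) = C.mul (C.mul p c) q) ↔ (C.mul q p = C.mul p q) := by
  rw [C.z_pull hc, C.z_slide hc]
  exact ⟨fun h => C.rcan h, fun h => by rw [h]⟩

section HalfAut

variable {f : α → α} (hf : C.toLoopStr.IsHalfAut f)

include hf

lemma f_one : f C.one = C.one := C.toLoopStr.half_one hf

lemma comm_easy {x y : α} (h : C.mul (f x) (f y) = C.mul (f y) (f x)) :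
    C.mul x y = C.mul y x := by
  apply hf.1.1
  rcases hf.2 x y with h1 | h1 <;> rcases hf.2 y x with h2 | h2 <;> rw [h1, h2] <;>
    first | rfl | exact h | exact h.symm

lemma comm_pres (x y : α) :
    C.mul x y = C.mul y x ↔ C.mul (f x) (f y) = C.mul (f y) (f x) := by
  constructor
  · intro hxy
    by_contra hne
    have hfin : Finite α := C.finite
    set S : Set (α × α) := {p : α × α | ¬ C.mul p.1 p.2 = C.mul p.2 p.1} with hS
    have hSfin : S.Finite := Set.toFinite S
    set g : α × α → α × α := fun p => (f p.1, f p.2) with hg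
    have hmaps : Set.MapsTo g S S := by
      intro p hp hq
      exact hp (C.comm_easy hf hq)
    have hinjOn : Set.InjOn g S := by
      intro p _ q _ h
      have h1 : f p.1 = f q.1 := congrArg Prod.fst h
      have h2 : f p.2 = f q.2 := congrArg Prod.snd h
      exact Prod.ext (hf.1.1 h1) (hf.1.1 h2)
    have hsurj : Set.SurjOn g S S :=
      ((hSfin.injOn_iff_bijOn_of_mapsTo hmaps).mp hinjOn).surjOn
    have hmem : (f x, f y) ∈ S := hne
    obtain ⟨p, hpS, hpe⟩ := hsurj hmem
    have h1 : f p.1 = f x := congrArg Prod.fst hpe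
    have h2 : f p.2 = f y := congrArg Prod.snd hpe
    have e1 : p.1 = x := hf.1.1 h1
    have e2 : p.2 = y := hf.1.1 h2
    have hpS' : ¬ C.mul p.1 p.2 = C.mul p.2 p.1 := hpS
    rw [e1, e2] at hpS'
    exact hpS' hxy
  · exact fun h => C.comm_easy hf h

lemma cm_f (s t : α) : C.cm s t = C.cm (f s) (f t) :=
  C.cm_congr (C.comm_pres hf s t)

lemma cm_f_mul (z x y : α) :
    C.cm z (C.mul x y) = C.cm (f z) (C.mul (f x) (f y)) := by
  have base : C.cm z (C.mul x y) = C.cm (f z) (f (C.mul x y)) :=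
    C.cm_congr (C.comm_pres hf z (C.mul x y))
  rcases hf.2 x y with h | h
  · rw [base, h]
  · rw [base, h, C.cm_spec (f y) (f x)]
    exact C.cm_congr (C.comm_zmul_iff (C.cm_isZ (f y) (f x)) (f z) (C.mul (f x) (f y)))

lemma sq_pres (x : α) : C.mul x x = C.one ↔ C.mul (f x) (f x) = C.one := by
  have h : f (C.mul x x) = C.mul (f x) (f x) := by
    rcases hf.2 x x with h | h <;> exact h
  constructor
  · intro hx
    rw [← h, hx, C.f_one hf]
  · intro hx
    apply hf.1.1
    rw [h, hx, C.f_one hf]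

lemma assoc_pres (x y z : α) :
    C.mul (C.mul x y) z = C.mul x (C.mul y z) ↔
      C.mul (C.mul (f x) (f y)) (f z) = C.mul (f x) (C.mul (f y) (f z)) := by
  rw [← C.asc_one_iff, ← C.asc_one_iff]
  have he : C.asc x y z = C.asc (f x) (f y) (f z) :=
    C.asc_congr (C.cm_f hf z x) (C.cm_f hf z y) (C.cm_f_mul hf z x y)
  rw [he]

/-- The inverse of a half-automorphism of a code loop is a half-automorphism. -/
lemma inv_half_aux {g : α → α} (hfg : ∀ z, f (g z) = z) :
    ∀ u v, g (C.mul u v) = C.mul (g u) (g v) ∨ g (C.mul u v) = C.mul (g v) (g u) := by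
  intro u v
  have hinjf : Function.Injective f := hf.1.1
  have key : ∀ w, f w = C.mul u v → g (C.mul u v) = w := by
    intro w hw
    apply hinjf
    rw [hfg, hw]
  rcases hf.2 (g u) (g v) with h | h
  · left
    exact key _ (by rw [h, hfg, hfg])
  · rcases hf.2 (g v) (g u) with h2 | h2
    · have hst : C.mul (g u) (g v) = C.mul (g v) (g u) := by
        apply hinjf
        rw [h, h2, hfg, hfg]
      have huv : C.mul u v = C.mul v u := by
        have hc := (C.comm_pres hf (g u) (g v)).mp hst
        rwa [hfg, hfg] at hc
      left
      exact key _ (by rw [h, hfg, hfg, ← huv])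
    · right
      exact key _ (by rw [h2, hfg, hfg])

lemma inv_half : C.toLoopStr.IsHalfAut ⇑(Equiv.ofBijective f hf.1).symm :=
  ⟨(Equiv.ofBijective f hf.1).symm.bijective,
    C.inv_half_aux hf fun z => (Equiv.ofBijective f hf.1).apply_symm_apply z⟩

end HalfAut

end CodeLoop


/-- A half-automorphism of a code loop maps a basis to a basis with the same
characteristic vector. -/
theorem stmt3 {α : Type*} (C : CodeLoop α) {n : ℕ} (a : Fin n → α)
    (hinj : Function.Injective a) (hbasis : C.toLoopStr.IsBasis (Set.range a))
    (f : α → α) (hf : C.toLoopStr.IsHalfAut f) :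
    Function.Injective (f ∘ a) ∧ C.toLoopStr.IsBasis (Set.range (f ∘ a)) ∧
    (∀ i, C.mul (a i) (a i) = C.one ↔ C.mul (f (a i)) (f (a i)) = C.one) ∧
    (∀ i j, i < j → (C.mul (a i) (a j) = C.mul (a j) (a i) ↔
        C.mul (f (a i)) (f (a j)) = C.mul (f (a j)) (f (a i)))) ∧
    (∀ i j k, i < j → j < k →
      (C.mul (C.mul (a i) (a j)) (a k) = C.mul (a i) (C.mul (a j) (a k)) ↔
        C.mul (C.mul (f (a i)) (f (a j))) (f (a k)) =
          C.mul (f (a i)) (C.mul (f (a j)) (f (a k))))) := by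
  have hrange : Set.range (f ∘ a) = f '' Set.range a := Set.range_comp f a
  set e := Equiv.ofBijective f hf.1 with he
  have hg : C.toLoopStr.IsHalfAut ⇑e.symm := C.inv_half hf
  refine ⟨hf.1.1.comp hinj, ⟨?_, ?_⟩, fun i => C.sq_pres hf (a i),
    fun i j _ => C.comm_pres hf (a i) (a j),
    fun i j k _ _ => C.assoc_pres hf (a i) (a j) (a k)⟩
  · rw [hrange]
    exact C.toLoopStr.gen_image hf hbasis.1
  · intro Y hY hGenY
    rw [hrange] at hY
    have hfg : ∀ z, f (e.symm z) = z := fun z => e.apply_symm_apply z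
    have hgf : ∀ z, e.symm (f z) = z := fun z => e.symm_apply_apply z
    have himg : f '' (⇑e.symm '' Y) = Y := by
      rw [Set.image_image]
      simp only [hfg, Set.image_id']
    have hZsub : ⇑e.symm '' Y ⊆ Set.range a := by
      rintro z ⟨y, hyY, rfl⟩
      obtain ⟨x, hx, rfl⟩ := hY.1 hyY
      rw [hgf]
      exact hx
    have hZne : ⇑e.symm '' Y ≠ Set.range a := by
      intro hEq
      apply hY.ne
      rw [← himg, hEq]
    exact hbasis.2 _ (Set.ssubset_iff_subset_ne.mpr ⟨hZsub, hZne⟩)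
      (C.toLoopStr.gen_image hg hGenY)
end

section
/- Let L be a code loop of rank n with basis B = {a₁, …, aₙ}, and for σ ⊆ {1,…,n} let a_σ be the left-normed product of the aᵢ with i ∈ σ taken in increasing order (a_∅ = 1), so that L = {a_σ, −a_σ : σ ⊆ {1,…,n}}. Let Ψ be a function from subsets of {1,…,n} to {1,−1} such that Ψ(∅) = 1, Ψ({j}) = 1 for every j, and Ψ(σ△μ) = Ψ(σ)·Ψ(μ) whenever a_σ·a_μ = a_μ·a_σ, where △ denotes symmetric difference. Then the map Ψ̂ : L → L defined by Ψ̂(a_σ) = Ψ(σ)·a_σ and Ψ̂(−a_σ) = −Ψ(σ)·a_σ is a half-automorphism of L fixing every element of B. -/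
theorem Finset.prod_mul_prod_eq_prod_symmDiff {ι M : Type*} [CommMonoid M] [DecidableEq ι]
    {f : ι → M} (hf : ∀ i, f i * f i = 1) (s t : Finset ι) :
    (∏ i ∈ s, f i) * ∏ i ∈ t, f i = ∏ i ∈ symmDiff s t, f i := by
  rw [← Finset.prod_union_inter, ← Finset.prod_sdiff (Finset.inter_subset_union (s := s) (t := t)),
    mul_assoc, ← Finset.prod_mul_distrib, Finset.prod_congr rfl fun i _ => hf i,
    Finset.prod_const_one, mul_one, symmDiff_eq_sup_sdiff_inf]
  rfl

namespace CodeLoop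

variable {α : Type*} {C : CodeLoop α}

def IsSign (C : CodeLoop α) (p : α) : Prop := p = C.one ∨ p = C.neg

theorem isSign_one : C.IsSign C.one := Or.inl rfl

theorem isSign_neg : C.IsSign C.neg := Or.inr rfl

namespace IsSign

variable {p q : α}

theorem mul_assoc_left (hp : C.IsSign p) (u v : α) :
    C.mul (C.mul p u) v = C.mul p (C.mul u v) := by
  rcases hp with rfl | rfl
  · rw [C.one_mul, C.one_mul]
  · exact C.neg_mul_assoc₁ u v

theorem mul_assoc_mid (hp : C.IsSign p) (u v : α) :
    C.mul (C.mul u p) v = C.mul u (C.mul p v) := by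
  rcases hp with rfl | rfl
  · rw [C.mul_one, C.one_mul]
  · exact C.neg_mul_assoc₂ u v

theorem mul_comm (hp : C.IsSign p) (u : α) : C.mul p u = C.mul u p := by
  rcases hp with rfl | rfl
  · rw [C.one_mul, C.mul_one]
  · exact C.neg_mul_comm u

theorem mul (hp : C.IsSign p) (hq : C.IsSign q) : C.IsSign (C.mul p q) := by
  rcases hp with rfl | rfl <;> rcases hq with rfl | rfl
  · exact Or.inl (C.one_mul _)
  · exact Or.inr (C.one_mul _)
  · exact Or.inr (C.mul_one _)
  · exact Or.inl C.neg_neg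

theorem mul_left_comm (hq : C.IsSign q) (u v : α) :
    C.mul u (C.mul q v) = C.mul q (C.mul u v) := by
  rw [← hq.mul_assoc_mid, ← hq.mul_comm u, hq.mul_assoc_left]

theorem mul_mul_mul_comm (hp : C.IsSign p) (hq : C.IsSign q) (u v : α) :
    C.mul (C.mul p u) (C.mul q v) = C.mul (C.mul p q) (C.mul u v) := by
  rw [hp.mul_assoc_left, hq.mul_left_comm, hp.mul_assoc_left]

theorem mul_mul_self (hp : C.IsSign p) (u : α) : C.mul p (C.mul p u) = u := by
  rcases hp with rfl | rfl
  · rw [C.one_mul, C.one_mul]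
  · rw [← C.neg_mul_assoc₁, C.neg_neg, C.one_mul]

theorem eq_or_eq_neg_mul (hp : C.IsSign p) (hq : C.IsSign q) :
    p = q ∨ p = C.mul C.neg q := by
  rcases hp with rfl | rfl <;> rcases hq with rfl | rfl
  · exact Or.inl rfl
  · exact Or.inr C.neg_neg.symm
  · exact Or.inr (C.mul_one _).symm
  · exact Or.inl rfl

end IsSign

def signSetoid (C : CodeLoop α) : Setoid α where
  r x y := ∃ s, C.IsSign s ∧ y = C.mul s x
  iseqv :=
    { refl := fun x => ⟨C.one, isSign_one, (C.one_mul x).symm⟩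
      symm := fun ⟨s, hs, h⟩ => ⟨s, hs, by rw [h, hs.mul_mul_self]⟩
      trans := fun ⟨s, hs, h⟩ ⟨t, ht, h'⟩ =>
        ⟨C.mul t s, ht.mul hs, by rw [h', h, ht.mul_assoc_left]⟩ }

def SignQuotient (C : CodeLoop α) : Type _ := Quotient C.signSetoid

def toSignQuotient (C : CodeLoop α) (x : α) : C.SignQuotient := Quotient.mk _ x

theorem exists_isSign_of_associator (x y z : α) :
    ∃ s, C.IsSign s ∧ C.mul (C.mul x y) z = C.mul s (C.mul x (C.mul y z)) := by
  rcases C.assoc_mem x y z with h | h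
  · exact ⟨C.one, isSign_one, by rw [h, C.one_mul]⟩
  · exact ⟨C.neg, isSign_neg, by rw [h, C.neg_mul_comm]⟩

theorem exists_isSign_of_commutator (x y : α) :
    ∃ s, C.IsSign s ∧ C.mul x y = C.mul s (C.mul y x) := by
  rcases C.comm_mem x y with h | h
  · exact ⟨C.one, isSign_one, by rw [h, C.one_mul]⟩
  · exact ⟨C.neg, isSign_neg, by rw [h, C.neg_mul_comm]⟩

instance : CommMonoid C.SignQuotient where
  mul := Quotient.map₂ C.mul fun _ _ ⟨s, hs, h⟩ _ _ ⟨t, ht, h'⟩ =>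
    ⟨C.mul s t, hs.mul ht, by rw [h, h', hs.mul_mul_mul_comm ht]⟩
  one := C.toSignQuotient C.one
  mul_assoc a b c := by
    induction a using Quotient.inductionOn
    induction b using Quotient.inductionOn
    induction c using Quotient.inductionOn
    exact (Quotient.sound (exists_isSign_of_associator _ _ _)).symm
  one_mul a := by
    induction a using Quotient.inductionOn
    exact congrArg C.toSignQuotient (C.one_mul _)
  mul_one a := by
    induction a using Quotient.inductionOn
    exact congrArg C.toSignQuotient (C.mul_one _)
  mul_comm a b := by
    induction a using Quotient.inductionOn
    induction b using Quotient.inductionOn with | _ b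
    exact Quotient.sound (exists_isSign_of_commutator b _)

theorem toSignQuotient_mul (x y : α) :
    C.toSignQuotient (C.mul x y) = C.toSignQuotient x * C.toSignQuotient y := rfl

theorem toSignQuotient_one : C.toSignQuotient C.one = 1 := rfl

theorem toSignQuotient_mul_self (x : α) : C.toSignQuotient x * C.toSignQuotient x = 1 := by
  have hs : C.IsSign (C.mul x x) := C.square_mem x
  exact Quotient.sound
    ⟨C.mul x x, hs, by simpa only [C.mul_one] using (hs.mul_mul_self C.one).symm⟩

theorem toSignQuotient_mul_of_isSign {p : α} (hp : C.IsSign p) (x : α) :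
    C.toSignQuotient (C.mul p x) = C.toSignQuotient x :=
  (Quotient.sound (s := C.signSetoid) (a := x) ⟨p, hp, rfl⟩).symm

theorem exists_isSign_of_toSignQuotient_eq {x y : α}
    (h : C.toSignQuotient x = C.toSignQuotient y) : ∃ s, C.IsSign s ∧ y = C.mul s x :=
  Quotient.exact h

theorem toSignQuotient_foldl (l : List α) (x : α) :
    C.toSignQuotient (l.foldl C.mul x) = C.toSignQuotient x * (l.map C.toSignQuotient).prod := by
  induction l generalizing x with
  | nil => simp
  | cons b t ih => rw [List.foldl_cons, ih, List.map_cons, List.prod_cons, toSignQuotient_mul,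
      mul_assoc]

theorem toSignQuotient_aSig {n : ℕ} (a : Fin n → α) (σ : Finset (Fin n)) :
    C.toSignQuotient (aSig C.toLoopStr a σ) = ∏ i ∈ σ, C.toSignQuotient (a i) := by
  rw [aSig, toSignQuotient_foldl, toSignQuotient_one, one_mul, List.map_map,
    ← Multiset.prod_coe, ← Multiset.map_coe, Finset.sort_eq, Finset.prod_map_val]
  rfl

theorem toSignQuotient_aSig_mul_aSig {n : ℕ} (a : Fin n → α) (σ μ : Finset (Fin n)) :
    C.toSignQuotient (aSig C.toLoopStr a σ) * C.toSignQuotient (aSig C.toLoopStr a μ)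
      = C.toSignQuotient (aSig C.toLoopStr a (symmDiff σ μ)) := by
  rw [toSignQuotient_aSig, toSignQuotient_aSig, toSignQuotient_aSig,
    Finset.prod_mul_prod_eq_prod_symmDiff fun i => toSignQuotient_mul_self (a i)]

theorem aSig_singleton {n : ℕ} (a : Fin n → α) (i : Fin n) :
    aSig C.toLoopStr a {i} = a i := by
  rw [aSig, Finset.sort_singleton, List.map_singleton, List.foldl_cons, List.foldl_nil, C.one_mul]

theorem mul_comm_of_toSignQuotient_eq {x x' y y' : α}
    (hx : C.toSignQuotient x = C.toSignQuotient x') (hy : C.toSignQuotient y = C.toSignQuotient y')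
    (hxy : C.mul x y = C.mul y x) : C.mul x' y' = C.mul y' x' := by
  obtain ⟨e, he, rfl⟩ := exists_isSign_of_toSignQuotient_eq hx
  obtain ⟨f, hf, rfl⟩ := exists_isSign_of_toSignQuotient_eq hy
  rw [he.mul_mul_mul_comm hf, hf.mul_mul_mul_comm he, hxy, he.mul_comm f]

theorem isHalfAut_of_mul_isSign {F : α → α} (hinv : Function.Involutive F)
    (hsign : ∀ x, ∃ s, C.IsSign s ∧ F x = C.mul s x)
    (hcomm : ∀ x y, C.mul x y = C.mul y x → F (C.mul x y) = C.mul (F x) (F y)) :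
    C.toLoopStr.IsHalfAut F := by
  refine ⟨hinv.bijective, fun x y => ?_⟩
  rcases C.comm_mem x y with hxy | hxy
  · exact Or.inl (hcomm x y hxy)
  obtain ⟨s, hs, hFxy⟩ := hsign (C.mul x y)
  obtain ⟨p, hp, hFx⟩ := hsign x
  obtain ⟨q, hq, hFy⟩ := hsign y
  have hyx : C.mul y x = C.mul C.neg (C.mul x y) := by
    rw [hxy, ← isSign_neg.mul_comm, isSign_neg.mul_mul_self]
  rcases hs.eq_or_eq_neg_mul (hp.mul hq) with rfl | rfl
  · left
    rw [hFxy, hFx, hFy, hp.mul_mul_mul_comm hq]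
  · right
    rw [hFxy, hFx, hFy, hq.mul_mul_mul_comm hp, hyx, hq.mul_comm p, isSign_neg.mul_left_comm,
      isSign_neg.mul_assoc_left]

end CodeLoop

theorem stmt4_general {α : Type*} (C : CodeLoop α) {n : ℕ} (a : Fin n → α)
    (hcover : ∀ x : α, ∃ σ : Finset (Fin n),
        x = aSig C.toLoopStr a σ ∨ x = C.mul C.neg (aSig C.toLoopStr a σ))
    (Ψ : Finset (Fin n) → α)
    (hΨval : ∀ σ, Ψ σ = C.one ∨ Ψ σ = C.neg)
    (hΨsingle : ∀ j, Ψ {j} = C.one)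
    (hΨmul : ∀ σ μ : Finset (Fin n),
        C.mul (aSig C.toLoopStr a σ) (aSig C.toLoopStr a μ) =
          C.mul (aSig C.toLoopStr a μ) (aSig C.toLoopStr a σ) →
        Ψ (symmDiff σ μ) = C.mul (Ψ σ) (Ψ μ))
    (F : α → α)
    (hF1 : ∀ σ, F (aSig C.toLoopStr a σ) = C.mul (Ψ σ) (aSig C.toLoopStr a σ))
    (hF2 : ∀ σ, F (C.mul C.neg (aSig C.toLoopStr a σ))
        = C.mul C.neg (C.mul (Ψ σ) (aSig C.toLoopStr a σ))) :
    C.toLoopStr.IsHalfAut F ∧ ∀ i, F (a i) = a i := by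
  have hΨ : ∀ σ, C.IsSign (Ψ σ) := hΨval
  have hrepr : ∀ x, ∃ σ, C.toSignQuotient x = C.toSignQuotient (aSig C.toLoopStr a σ) := by
    intro x
    obtain ⟨σ, rfl | rfl⟩ := hcover x
    · exact ⟨σ, rfl⟩
    · exact ⟨σ, CodeLoop.toSignQuotient_mul_of_isSign CodeLoop.isSign_neg _⟩
  have hF : ∀ σ x, C.toSignQuotient x = C.toSignQuotient (aSig C.toLoopStr a σ) →
      F x = C.mul (Ψ σ) x := by
    intro σ x hx
    obtain ⟨e, rfl | rfl, rfl⟩ := CodeLoop.exists_isSign_of_toSignQuotient_eq hx.symm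
    · rw [C.one_mul, hF1]
    · rw [hF2, (hΨ σ).mul_left_comm]
  refine ⟨CodeLoop.isHalfAut_of_mul_isSign (fun x => ?_) (fun x => ?_) (fun x y hxy => ?_),
    fun i => ?_⟩
  · obtain ⟨σ, hx⟩ := hrepr x
    rw [hF σ x hx, hF σ _ ((CodeLoop.toSignQuotient_mul_of_isSign (hΨ σ) x).trans hx),
      (hΨ σ).mul_mul_self]
  · obtain ⟨σ, hx⟩ := hrepr x
    exact ⟨Ψ σ, hΨ σ, hF σ x hx⟩
  · obtain ⟨σ, hx⟩ := hrepr x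
    obtain ⟨μ, hy⟩ := hrepr y
    have hxy' : C.toSignQuotient (C.mul x y)
        = C.toSignQuotient (aSig C.toLoopStr a (symmDiff σ μ)) := by
      rw [CodeLoop.toSignQuotient_mul, hx, hy, CodeLoop.toSignQuotient_aSig_mul_aSig]
    rw [hF _ _ hxy', hΨmul σ μ (CodeLoop.mul_comm_of_toSignQuotient_eq hx hy hxy), hF σ x hx,
      hF μ y hy, (hΨ σ).mul_mul_mul_comm (hΨ μ)]
  · rw [← CodeLoop.aSig_singleton (C := C) a i, hF1, hΨsingle, C.one_mul]

/-- A function `Ψ : P_n → {1, -1}` with `Ψ(∅) = Ψ({j}) = 1` and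
`Ψ(σ Δ μ) = Ψ(σ)·Ψ(μ)` whenever `a_σ` and `a_μ` commute induces a half-automorphism
`Ψ̂` of the code loop fixing every basis element. -/
theorem stmt4 {α : Type*} (C : CodeLoop α) {n : ℕ} (a : Fin n → α)
    (hinj : Function.Injective a) (hbasis : C.toLoopStr.IsBasis (Set.range a))
    (hcover : ∀ x : α, ∃ σ : Finset (Fin n),
        x = aSig C.toLoopStr a σ ∨ x = C.mul C.neg (aSig C.toLoopStr a σ))
    (Ψ : Finset (Fin n) → α)
    (hΨval : ∀ σ, Ψ σ = C.one ∨ Ψ σ = C.neg)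
    (hΨempty : Ψ ∅ = C.one)
    (hΨsingle : ∀ j, Ψ {j} = C.one)
    (hΨmul : ∀ σ μ : Finset (Fin n),
        C.mul (aSig C.toLoopStr a σ) (aSig C.toLoopStr a μ) =
          C.mul (aSig C.toLoopStr a μ) (aSig C.toLoopStr a σ) →
        Ψ (symmDiff σ μ) = C.mul (Ψ σ) (Ψ μ))
    (F : α → α)
    (hF1 : ∀ σ, F (aSig C.toLoopStr a σ) = C.mul (Ψ σ) (aSig C.toLoopStr a σ))
    (hF2 : ∀ σ, F (C.mul C.neg (aSig C.toLoopStr a σ))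
        = C.mul C.neg (C.mul (Ψ σ) (aSig C.toLoopStr a σ))) :
    C.toLoopStr.IsHalfAut F ∧ ∀ i, F (a i) = a i :=
  stmt4_general C a hcover Ψ hΨval hΨsingle hΨmul F hF1 hF2
end

section
/- Let L be a code loop with basis B, and let φ and ψ be half-automorphisms of L each fixing every element of B. Then φ∘φ is the identity map of L and φ∘ψ = ψ∘φ. Consequently the set H_B(L) of all half-automorphisms of L fixing every element of B is an elementary abelian 2-group under composition. -/
namespace StmtAux

variable {α : Type*} (C : CodeLoop α)

lemma cl (a : α) {x y : α} (h : C.toLoopStr.mul a x = C.toLoopStr.mul a y) : x = y :=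
  (C.toLoopStr.mulLeft_bij a).1 h

lemma cr (a : α) {x y : α} (h : C.toLoopStr.mul x a = C.toLoopStr.mul y a) : x = y :=
  (C.toLoopStr.mulRight_bij a).1 h

lemma mul_n_n (x : α) :
    C.toLoopStr.mul (C.toLoopStr.mul x C.neg) C.neg = x := by
  rw [C.neg_mul_assoc₃, C.neg_neg, C.toLoopStr.mul_one]

lemma mul_n_left (x y : α) :
    C.toLoopStr.mul (C.toLoopStr.mul x C.neg) y =
      C.toLoopStr.mul (C.toLoopStr.mul x y) C.neg := by
  rw [C.neg_mul_assoc₂, C.neg_mul_comm, ← C.neg_mul_assoc₃]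

lemma mul_n_right (x y : α) :
    C.toLoopStr.mul x (C.toLoopStr.mul y C.neg) =
      C.toLoopStr.mul (C.toLoopStr.mul x y) C.neg :=
  (C.neg_mul_assoc₃ x y).symm

lemma half_one {φ : α → α} (hφ : C.toLoopStr.IsHalfAut φ) :
    φ C.toLoopStr.one = C.toLoopStr.one := by
  have h := hφ.2 C.toLoopStr.one C.toLoopStr.one
  rw [C.toLoopStr.one_mul] at h
  have h' : φ C.toLoopStr.one =
      C.toLoopStr.mul (φ C.toLoopStr.one) (φ C.toLoopStr.one) := by
    rcases h with h | h <;> exact h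
  exact cl C (φ C.toLoopStr.one)
    (h'.symm.trans (C.toLoopStr.mul_one _).symm)

lemma half_neg {φ : α → α} (hφ : C.toLoopStr.IsHalfAut φ) : φ C.neg = C.neg := by
  obtain ⟨x, hx⟩ := C.neg_is_square
  have h := hφ.2 x x
  rw [hx] at h
  have hsq : ∃ z, C.toLoopStr.mul z z = φ C.neg := by
    rcases h with h | h <;> exact ⟨φ x, h.symm⟩
  have hne : φ C.neg ≠ C.toLoopStr.one := by
    intro he
    exact C.neg_ne_one (hφ.1.1 (he.trans (half_one C hφ).symm))
  exact C.square_unique _ hne hsq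

/-- For a half-automorphism fixing `-1`, `φ (x · -1) = φ x · -1`. -/
lemma half_mul_neg {φ : α → α} (hφ : C.toLoopStr.IsHalfAut φ) (x : α) :
    φ (C.toLoopStr.mul x C.neg) = C.toLoopStr.mul (φ x) C.neg := by
  have h := hφ.2 x C.neg
  rw [half_neg C hφ] at h
  rcases h with h | h
  · exact h
  · rw [h, C.neg_mul_comm]

/-- The key lemma: a half-automorphism fixing a basis pointwise maps every
element `x` to `x` or `x · -1`. -/
lemma half_key {B : Set α} (hB : C.toLoopStr.IsBasis B) {φ : α → α}
    (hφ : C.toLoopStr.IsHalfAut φ) (hφB : ∀ b ∈ B, φ b = b) (x : α) :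
    φ x = x ∨ φ x = C.toLoopStr.mul x C.neg := by
  set n := C.neg with hn
  set T : Set α := {x | φ x = x ∨ φ x = C.toLoopStr.mul x n} with hT
  have hBT : B ⊆ T := fun b hb => Or.inl (hφB b hb)
  have hclosed : C.toLoopStr.IsClosed T := by
    refine ⟨Or.inl (half_one C hφ), ?_, ?_, ?_⟩
    · -- closed under multiplication
      intro x hx y hy
      have h := hφ.2 x y
      rcases h with h | h
      · rcases hx with hx | hx <;> rcases hy with hy | hy <;>
          rw [hx, hy] at h
        · exact Or.inl h
        · rw [mul_n_right] at h; exact Or.inr h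
        · rw [mul_n_left] at h; exact Or.inr h
        · rw [mul_n_left, mul_n_right, mul_n_n] at h; exact Or.inl h
      · rcases C.comm_mem y x with hc | hc
        · rcases hx with hx | hx <;> rcases hy with hy | hy <;>
            rw [hx, hy] at h
          · rw [hc] at h; exact Or.inl h
          · rw [mul_n_left, hc] at h; exact Or.inr h
          · rw [mul_n_right, hc] at h; exact Or.inr h
          · rw [mul_n_left, mul_n_right, mul_n_n, hc] at h; exact Or.inl h
        · -- y·x = (x·y)·n
          rcases hx with hx | hx <;> rcases hy with hy | hy <;>
            rw [hx, hy] at h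
          · rw [hc] at h; exact Or.inr h
          · rw [mul_n_left, hc, mul_n_n] at h; exact Or.inl h
          · rw [mul_n_right, hc, mul_n_n] at h; exact Or.inl h
          · rw [mul_n_left, mul_n_right, mul_n_n, hc] at h; exact Or.inr h
    · -- closed under right inverses : x ∈ T, x·y = 1 ⇒ y ∈ T
      intro x hx y hxy
      have h := hφ.2 x y
      rw [hxy, half_one C hφ] at h
      have hnn : C.toLoopStr.mul n n = C.toLoopStr.one := C.neg_neg
      rcases h with h | h
      · rcases hx with hx | hx
        · rw [hx] at h
          exact Or.inl (cl C x (h.symm.trans hxy.symm))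
        · rw [hx, mul_n_left] at h
          have h2 : C.toLoopStr.mul x (φ y) = n := cr C n (h.symm.trans hnn.symm)
          have h3 : C.toLoopStr.mul x (C.toLoopStr.mul y n) = n := by
            rw [mul_n_right, hxy, C.toLoopStr.one_mul]
          exact Or.inr (cl C x (h2.trans h3.symm))
      · rcases C.comm_mem x y with hc | hc
        · -- x·y = y·x, so y·x = 1
          have hyx : C.toLoopStr.mul y x = C.toLoopStr.one := hc ▸ hxy
          rcases hx with hx | hx
          · rw [hx] at h
            exact Or.inl (cr C x (h.symm.trans hyx.symm))
          · rw [hx, mul_n_right] at h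
            have h2 : C.toLoopStr.mul (φ y) x = n := cr C n (h.symm.trans hnn.symm)
            have h3 : C.toLoopStr.mul (C.toLoopStr.mul y n) x = n := by
              rw [mul_n_left, hyx, C.toLoopStr.one_mul]
            exact Or.inr (cr C x (h2.trans h3.symm))
        · -- x·y = (y·x)·n, so y·x = n
          have hyx : C.toLoopStr.mul y x = n := by
            apply cr C n
            rw [← hc, hxy, hnn]
          rcases hx with hx | hx
          · rw [hx] at h
            have h3 : C.toLoopStr.mul (C.toLoopStr.mul y n) x =
                C.toLoopStr.one := by
              rw [mul_n_left, hyx, hnn]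
            exact Or.inr (cr C x (h.symm.trans h3.symm))
          · rw [hx, mul_n_right] at h
            have h2 : C.toLoopStr.mul (φ y) x = n := cr C n (h.symm.trans hnn.symm)
            exact Or.inl (cr C x (h2.trans hyx.symm))
    · -- closed under left inverses : x ∈ T, y·x = 1 ⇒ y ∈ T
      intro x hx y hyx
      have h := hφ.2 y x
      rw [hyx, half_one C hφ] at h
      have hnn : C.toLoopStr.mul n n = C.toLoopStr.one := C.neg_neg
      rcases h with h | h
      · rcases hx with hx | hx
        · rw [hx] at h
          exact Or.inl (cr C x (h.symm.trans hyx.symm))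
        · rw [hx, mul_n_right] at h
          have h2 : C.toLoopStr.mul (φ y) x = n := cr C n (h.symm.trans hnn.symm)
          have h3 : C.toLoopStr.mul (C.toLoopStr.mul y n) x = n := by
            rw [mul_n_left, hyx, C.toLoopStr.one_mul]
          exact Or.inr (cr C x (h2.trans h3.symm))
      · rcases C.comm_mem y x with hc | hc
        · -- y·x = x·y, so x·y = 1
          have hxy : C.toLoopStr.mul x y = C.toLoopStr.one := hc ▸ hyx
          rcases hx with hx | hx
          · rw [hx] at h
            exact Or.inl (cl C x (h.symm.trans hxy.symm))
          · rw [hx, mul_n_left] at h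
            have h2 : C.toLoopStr.mul x (φ y) = n := cr C n (h.symm.trans hnn.symm)
            have h3 : C.toLoopStr.mul x (C.toLoopStr.mul y n) = n := by
              rw [mul_n_right, hxy, C.toLoopStr.one_mul]
            exact Or.inr (cl C x (h2.trans h3.symm))
        · -- y·x = (x·y)·n, so x·y = n
          have hxy : C.toLoopStr.mul x y = n := by
            apply cr C n
            rw [← hc, hyx, hnn]
          rcases hx with hx | hx
          · rw [hx] at h
            have h3 : C.toLoopStr.mul x (C.toLoopStr.mul y n) =
                C.toLoopStr.one := by
              rw [mul_n_right, hxy, hnn]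
            exact Or.inr (cl C x (h.symm.trans h3.symm))
          · rw [hx, mul_n_left] at h
            have h2 : C.toLoopStr.mul x (φ y) = n := cr C n (h.symm.trans hnn.symm)
            exact Or.inl (cl C x (h2.trans hxy.symm))
  have hgen : C.toLoopStr.gen B ⊆ T := Set.sInter_subset_of_mem ⟨hBT, hclosed⟩
  have hx : x ∈ T := hgen (by rw [hB.1]; exact Set.mem_univ x)
  exact hx

end StmtAux

/-- Half-automorphisms of a code loop fixing every element of a basis are involutions and
commute with each other; hence `H_B(L)` is an elementary abelian 2-group. -/
theorem stmt6 {α : Type*} (C : CodeLoop α) (B : Set α) (hB : C.toLoopStr.IsBasis B)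
    (φ ψ : α → α) (hφ : C.toLoopStr.IsHalfAut φ) (hφB : ∀ b ∈ B, φ b = b)
    (hψ : C.toLoopStr.IsHalfAut ψ) (hψB : ∀ b ∈ B, ψ b = b) :
    φ ∘ φ = id ∧ φ ∘ ψ = ψ ∘ φ := by
  have keyφ := StmtAux.half_key C hB hφ hφB
  have keyψ := StmtAux.half_key C hB hψ hψB
  constructor
  · funext x
    simp only [Function.comp_apply, id_eq]
    rcases keyφ x with h | h
    · rw [h, h]
    · rw [h, StmtAux.half_mul_neg C hφ, h, StmtAux.mul_n_n]
  · funext x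
    simp only [Function.comp_apply]
    rcases keyφ x with h1 | h1 <;> rcases keyψ x with h2 | h2
    · rw [h2, h1, h2]
    · rw [h2, h1, StmtAux.half_mul_neg C hφ, h1]
      exact h2.symm
    · rw [h2, h1, StmtAux.half_mul_neg C hψ, h2]
    · rw [h2, StmtAux.half_mul_neg C hφ, h1,
        StmtAux.half_mul_neg C hψ, h2]
end
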